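/- Let T be a triangulated category, N a triangulated subcategory of T, and U, V subcategories such that (U, U^⊥) and (^⊥V, V) are torsion pairs in T. Set X = U ∩ V ∩ N and assume that X is closed under direct summands, that (^⊥V)[1] ⊆ U ∩ N, and that U^⊥[-1] = V ∩ N. Then for every distinguished triangle A →(s) B → N → A[1] with A, B ∈ U ∩ V and N ∈ N, there exists a morphism t: B → A such that 1_A − t∘s and 1_B − s∘t both factor through X (that is, (U, X, V) satisfies the Verdier condition). -/

import Mathlib

/-!
Rotate the triangle to `M → A → B → M[1]` with `M = N₀[-1] ∈ N`, and split `M` by the torsion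
pair `(^⊥V, V)` as `C → M → D → C[1]`; the hypotheses put `C[1]` in `U ∩ N` and `D` in `V ∩ N`.
Every morphism from an object of `U` to one of `V ∩ N`, and from `U ∩ N` to `V`, factors through
`X`: split the target by `(U, U^⊥)`, resp. the source by `(^⊥V, V)`. As `A ∈ V`, the map `M → A`
factors through `D`, and comparing the two triangles gives `t₁` with `1_A - t₁ s` factoring
through some `A → D`, and `t₂` with `1_B - s t₂` factoring through some `C[1] → B`. Finally `X`
is closed under finite sums (the summand hypothesis identifies it with the objects `Y` such that
`Hom(Y, U^⊥) = 0` and `Y[1] ∈ U^⊥`), so morphisms factoring through `X` form an ideal, and `t₂`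
is then also a retraction of `s` modulo that ideal.
-/


open CategoryTheory Category Limits Pretriangulated

universe v u

variable {T : Type u} [Category.{v} T] [HasZeroObject T] [HasShift T ℤ]
  [Preadditive T] [∀ n : ℤ, (CategoryTheory.shiftFunctor T n).Additive] [Pretriangulated T]

namespace VerdierPaper

/-- A morphism factors through the subcategory `X`. -/
def FactorsThru (X : Set T) {A B : T} (f : A ⟶ B) : Prop :=
  ∃ (X₀ : T) (_ : X₀ ∈ X) (g : A ⟶ X₀) (h : X₀ ⟶ B), f = g ≫ h

/-- A triangulated subcategory: closed under isomorphisms, shifts in both directions,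
contains a zero object, and two-out-of-three for distinguished triangles. -/
structure IsTriangulatedSub (N : Set T) : Prop where
  zero : ∃ Z ∈ N, IsZero Z
  closedIso : ∀ {A B : T}, (A ≅ B) → A ∈ N → B ∈ N
  shift : ∀ A ∈ N, (A⟦(1 : ℤ)⟧) ∈ N
  unshift : ∀ A ∈ N, (A⟦(-1 : ℤ)⟧) ∈ N
  two_of_three₁₂ : ∀ Tr ∈ (distTriang T), Tr.obj₁ ∈ N → Tr.obj₂ ∈ N → Tr.obj₃ ∈ N
  two_of_three₂₃ : ∀ Tr ∈ (distTriang T), Tr.obj₂ ∈ N → Tr.obj₃ ∈ N → Tr.obj₁ ∈ N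
  two_of_three₁₃ : ∀ Tr ∈ (distTriang T), Tr.obj₁ ∈ N → Tr.obj₃ ∈ N → Tr.obj₂ ∈ N

/-- Closed under direct summands (retracts). -/
def ClosedUnderSummands (S : Set T) : Prop :=
  ∀ (X₀ A : T), X₀ ∈ S → ∀ (i : A ⟶ X₀) (r : X₀ ⟶ A), i ≫ r = 𝟙 A → A ∈ S

/-- `f : A ⟶ B` is `X`-monic: every morphism from `A` to an object of `X` extends along `f`. -/
def XMonic (X : Set T) {A B : T} (f : A ⟶ B) : Prop :=
  ∀ X₀ ∈ X, ∀ g : A ⟶ X₀, ∃ h : B ⟶ X₀, f ≫ h = g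

/-- `f : A ⟶ B` is `X`-epic: every morphism from an object of `X` to `B` lifts along `f`. -/
def XEpic (X : Set T) {A B : T} (f : A ⟶ B) : Prop :=
  ∀ X₀ ∈ X, ∀ g : X₀ ⟶ B, ∃ h : X₀ ⟶ A, h ≫ f = g

/-- An `X`-preenvelope: an `X`-monic with target in `X`. -/
def Preenvelope (X : Set T) {A X₀ : T} (f : A ⟶ X₀) : Prop :=
  X₀ ∈ X ∧ XMonic X f

/-- An `X`-precover: an `X`-epic with source in `X`. -/
def Precover (X : Set T) {X₀ B : T} (f : X₀ ⟶ B) : Prop :=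
  X₀ ∈ X ∧ XEpic X f

/-- `U^{⊥,X}`: objects such that every morphism from an object of `U` factors through `X`. -/
def perpRightX (U X : Set T) : Set T :=
  {W | ∀ U₀ ∈ U, ∀ f : U₀ ⟶ W, FactorsThru X f}

/-- `^{X,⊥}V`: objects such that every morphism to an object of `V` factors through `X`. -/
def perpLeftX (X V : Set T) : Set T :=
  {W | ∀ V₀ ∈ V, ∀ f : W ⟶ V₀, FactorsThru X f}

/-- A localization triple `(U, X, V)` of `T`. Triangles `A[-1] → W → Q → A` are
recorded in the rotated form `W → Q → A → W[1]`. -/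
structure IsLocalizationTriple (U X V : Set T) : Prop where
  subU : X ⊆ U
  subV : X ⊆ V
  precover : ∀ A : T, ∃ (W Q : T) (w : W ⟶ Q) (r : Q ⟶ A) (d : A ⟶ W⟦(1 : ℤ)⟧),
    Triangle.mk w r d ∈ (distTriang T) ∧ Precover U r ∧ W ∈ perpRightX U X
  preenvelope : ∀ A : T, ∃ (R W : T) (j : A ⟶ R) (t : R ⟶ W) (d : W ⟶ A⟦(1 : ℤ)⟧),
    Triangle.mk j t d ∈ (distTriang T) ∧ Preenvelope V j ∧ W ∈ perpLeftX X V
  precoverV : ∀ A ∈ V, ∃ (W Q : T) (w : W ⟶ Q) (r : Q ⟶ A) (d : A ⟶ W⟦(1 : ℤ)⟧),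
    Triangle.mk w r d ∈ (distTriang T) ∧ Precover U r ∧ W ∈ perpRightX U X ∧
    Q ∈ U ∩ V ∧ W ∈ V ∧ W ∈ perpRightX (U ∩ V) X
  preenvelopeU : ∀ A ∈ U, ∃ (R W : T) (j : A ⟶ R) (t : R ⟶ W) (d : W ⟶ A⟦(1 : ℤ)⟧),
    Triangle.mk j t d ∈ (distTriang T) ∧ Preenvelope V j ∧ W ∈ perpLeftX X V ∧
    R ∈ U ∩ V ∧ W ∈ U ∧ W ∈ perpLeftX X (U ∩ V)

/-- An `N`-localization triple. -/
structure IsNLocalizationTriple (N U X V : Set T) extends IsLocalizationTriple U X V : Prop where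
  xEq : X = U ∩ V ∩ N
  perpR_subset : perpRightX U X ⊆ N
  perpL_subset : perpLeftX X V ⊆ N

/-- The Verdier condition for an `N`-localization triple. -/
def VerdierCondition (N U X V : Set T) : Prop :=
  ∀ (A B N₀ : T) (s : A ⟶ B) (g : B ⟶ N₀) (h : N₀ ⟶ A⟦(1 : ℤ)⟧),
    Triangle.mk s g h ∈ (distTriang T) → A ∈ U ∩ V → B ∈ U ∩ V → N₀ ∈ N →
    ∃ t : B ⟶ A, FactorsThru X (𝟙 A - s ≫ t) ∧ FactorsThru X (𝟙 B - t ≫ s)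


/-- A torsion pair `(Cc, Dd)` in `T`. -/
def TorsionPair (Cc Dd : Set T) : Prop :=
  (∀ C₀ ∈ Cc, ∀ D₀ ∈ Dd, ∀ f : C₀ ⟶ D₀, f = 0) ∧
  ∀ A : T, ∃ (C₀ D₀ : T) (f : C₀ ⟶ A) (g : A ⟶ D₀) (h : D₀ ⟶ C₀⟦(1 : ℤ)⟧),
    Triangle.mk f g h ∈ (distTriang T) ∧ C₀ ∈ Cc ∧ D₀ ∈ Dd

/-- `U^⊥`. -/
def rightPerp (U : Set T) : Set T := {A | ∀ U₀ ∈ U, ∀ f : U₀ ⟶ A, f = 0}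

/-- `^⊥V`. -/
def leftPerp (V : Set T) : Set T := {A | ∀ V₀ ∈ V, ∀ f : A ⟶ V₀, f = 0}

section Orthogonal

variable {S : Set T}

lemma obj₂_mem_rightPerp {Tr : Triangle T} (hT : Tr ∈ distTriang T)
    (h₁ : Tr.obj₁ ∈ rightPerp S) (h₃ : Tr.obj₃ ∈ rightPerp S) : Tr.obj₂ ∈ rightPerp S :=
  fun _ hU f ↦ ((ObjectProperty.rightOrthogonal (· ∈ S)).ext_of_isTriangulatedClosed₂ Tr hT
    (fun _ g hg ↦ h₁ _ hg g) (fun _ g hg ↦ h₃ _ hg g)) f hU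

lemma obj₂_mem_leftPerp {Tr : Triangle T} (hT : Tr ∈ distTriang T)
    (h₁ : Tr.obj₁ ∈ leftPerp S) (h₃ : Tr.obj₃ ∈ leftPerp S) : Tr.obj₂ ∈ leftPerp S :=
  fun _ hV f ↦ ((ObjectProperty.leftOrthogonal (· ∈ S)).ext_of_isTriangulatedClosed₂ Tr hT
    (fun _ g hg ↦ h₁ _ hg g) (fun _ g hg ↦ h₃ _ hg g)) f hV

lemma mem_leftPerp_of_iso {A B : T} (e : A ≅ B) (hA : A ∈ leftPerp S) : B ∈ leftPerp S :=
  fun V₀ hV₀ f ↦ by simpa using e.inv ≫= hA V₀ hV₀ (e.hom ≫ f)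

lemma mem_leftPerp_rightPerp {A : T} (hA : A ∈ S) : A ∈ leftPerp (rightPerp S) :=
  fun _ hW f ↦ hW A hA f

lemma shift_neg_one_hom_eq_zero {B D : T} (hB : B ∈ S) (hD : D⟦(1 : ℤ)⟧ ∈ rightPerp S)
    (f : B⟦(-1 : ℤ)⟧ ⟶ D) : f = 0 := by
  apply (shiftFunctor T (1 : ℤ)).map_injective
  rw [Functor.map_zero, ← cancel_epi (shiftNegShift B (1 : ℤ)).inv, comp_zero]
  exact hD B hB _

end Orthogonal

section FactorsThru

variable {X : Set T} {A B C : T}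

lemma FactorsThru.comp_left (g : C ⟶ A) {f : A ⟶ B} (hf : FactorsThru X f) :
    FactorsThru X (g ≫ f) := by
  obtain ⟨X₀, hX₀, f₁, f₂, rfl⟩ := hf
  exact ⟨X₀, hX₀, g ≫ f₁, f₂, by simp⟩

lemma FactorsThru.comp_right {f : A ⟶ B} (hf : FactorsThru X f) (g : B ⟶ C) :
    FactorsThru X (f ≫ g) := by
  obtain ⟨X₀, hX₀, f₁, f₂, rfl⟩ := hf
  exact ⟨X₀, hX₀, f₁, f₂ ≫ g, by simp⟩

lemma FactorsThru.add (hX : ∀ X₁ ∈ X, ∀ X₂ ∈ X, (X₁ ⊞ X₂) ∈ X) {f₁ f₂ : A ⟶ B}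
    (hf₁ : FactorsThru X f₁) (hf₂ : FactorsThru X f₂) : FactorsThru X (f₁ + f₂) := by
  obtain ⟨X₁, hX₁, g₁, k₁, rfl⟩ := hf₁
  obtain ⟨X₂, hX₂, g₂, k₂, rfl⟩ := hf₂
  exact ⟨X₁ ⊞ X₂, hX _ hX₁ _ hX₂, biprod.lift g₁ g₂, biprod.desc k₁ k₂, by simp⟩

lemma factorsThru_id_sub_comp_of_factorsThru (hX : ∀ X₁ ∈ X, ∀ X₂ ∈ X, (X₁ ⊞ X₂) ∈ X)
    {s : A ⟶ B} {t₁ t₂ : B ⟶ A} (h₁ : FactorsThru X (𝟙 A - s ≫ t₁))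
    (h₂ : FactorsThru X (𝟙 B - t₂ ≫ s)) : FactorsThru X (𝟙 A - s ≫ t₂) := by
  have key : 𝟙 A - s ≫ t₂ = (𝟙 A - s ≫ t₂) ≫ (𝟙 A - s ≫ t₁) + s ≫ (𝟙 B - t₂ ≫ s) ≫ t₁ := by
    simp only [Preadditive.comp_sub, Preadditive.sub_comp, comp_id, id_comp, assoc]
    abel
  rw [key]
  exact (h₁.comp_left _).add hX ((h₂.comp_right t₁).comp_left s)

end FactorsThru

section TorsionPairs

variable {N U V X : Set T}

lemma mem_of_shift_mem_rightPerp (hX : X = U ∩ V ∩ N)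
    (h2 : ∀ A : T, (A⟦(1 : ℤ)⟧) ∈ rightPerp U ↔ A ∈ V ∩ N) {A : T} (hA : A ∈ U)
    (hA1 : A⟦(1 : ℤ)⟧ ∈ rightPerp U) : A ∈ X := by
  subst hX
  exact ⟨⟨hA, ((h2 A).1 hA1).1⟩, ((h2 A).1 hA1).2⟩

/-- The `U`-part `U₀ → Y` of the torsion triangle of `Y` splits, so `Y` is a summand of `U₀`. -/
lemma mem_of_mem_leftPerp_rightPerp (htpU : TorsionPair U (rightPerp U))
    (hX : X = U ∩ V ∩ N) (hXsumm : ClosedUnderSummands X)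
    (h2 : ∀ A : T, (A⟦(1 : ℤ)⟧) ∈ rightPerp U ↔ A ∈ V ∩ N) {Y : T}
    (hY : Y ∈ leftPerp (rightPerp U)) (hY1 : Y⟦(1 : ℤ)⟧ ∈ rightPerp U) : Y ∈ X := by
  obtain ⟨U₀, W, i, q, e, hT, hU₀, hW⟩ := htpU.2 Y
  obtain ⟨r, hr⟩ := Triangle.coyoneda_exact₂ _ hT (𝟙 Y) ((id_comp q).trans (hY W hW q))
  have hU₀1 : U₀⟦(1 : ℤ)⟧ ∈ rightPerp U :=
    obj₂_mem_rightPerp (rot_of_distTriang _ (rot_of_distTriang _ hT)) hW hY1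
  exact hXsumm U₀ Y (mem_of_shift_mem_rightPerp hX h2 hU₀ hU₀1) r i hr.symm

lemma biprod_mem (htpU : TorsionPair U (rightPerp U)) (hX : X = U ∩ V ∩ N)
    (hXsumm : ClosedUnderSummands X) (h2 : ∀ A : T, (A⟦(1 : ℤ)⟧) ∈ rightPerp U ↔ A ∈ V ∩ N)
    {X₁ X₂ : T} (hX₁ : X₁ ∈ X) (hX₂ : X₂ ∈ X) : (X₁ ⊞ X₂) ∈ X := by
  have hT := binaryBiproductTriangle_distinguished X₁ X₂
  subst hX
  refine mem_of_mem_leftPerp_rightPerp htpU rfl hXsumm h2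
    (obj₂_mem_leftPerp hT (mem_leftPerp_rightPerp hX₁.1.1) (mem_leftPerp_rightPerp hX₂.1.1))
    (obj₂_mem_rightPerp (Triangle.shift_distinguished _ hT 1) ?_ ?_)
  · exact (h2 X₁).2 ⟨hX₁.1.2, hX₁.2⟩
  · exact (h2 X₂).2 ⟨hX₂.1.2, hX₂.2⟩

lemma exists_distTriang_leftPerp (hN : IsTriangulatedSub N)
    (htpV : TorsionPair (leftPerp V) V) (h1 : ∀ A : T, (A⟦(-1 : ℤ)⟧) ∈ leftPerp V → A ∈ U ∩ N)
    {M : T} (hM : M ∈ N) :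
    ∃ (C D : T) (c : C ⟶ M) (p : M ⟶ D) (d : D ⟶ C⟦(1 : ℤ)⟧),
      Triangle.mk c p d ∈ distTriang T ∧ C ∈ leftPerp V ∧ C⟦(1 : ℤ)⟧ ∈ U ∩ N ∧ D ∈ V ∩ N := by
  obtain ⟨C, D, c, p, d, hT, hC, hD⟩ := htpV.2 M
  have hC1 : C⟦(1 : ℤ)⟧ ∈ U ∩ N := h1 _ (mem_leftPerp_of_iso (shiftShiftNeg C (1 : ℤ)).symm hC)
  have hCN : C ∈ N := hN.closedIso (shiftShiftNeg C (1 : ℤ)) (hN.unshift _ hC1.2)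
  exact ⟨C, D, c, p, d, hT, hC, hC1, hD, hN.two_of_three₁₂ _ hT hCN hM⟩

lemma inter_subset_perpRightX (htpU : TorsionPair U (rightPerp U)) (hX : X = U ∩ V ∩ N)
    (h2 : ∀ A : T, (A⟦(1 : ℤ)⟧) ∈ rightPerp U ↔ A ∈ V ∩ N) : V ∩ N ⊆ perpRightX U X := by
  intro D hD U₀ hU₀ f
  obtain ⟨X₀, W, i, q, e, hT, hX₀, hW⟩ := htpU.2 D
  have hX₀1 : X₀⟦(1 : ℤ)⟧ ∈ rightPerp U :=
    obj₂_mem_rightPerp (rot_of_distTriang _ (rot_of_distTriang _ hT)) hW ((h2 D).2 hD)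
  obtain ⟨f', hf'⟩ := Triangle.coyoneda_exact₂ _ hT f (hW U₀ hU₀ _)
  exact ⟨X₀, mem_of_shift_mem_rightPerp hX h2 hX₀ hX₀1, f', i, hf'⟩

lemma inter_subset_perpLeftX (hN : IsTriangulatedSub N) (htpU : TorsionPair U (rightPerp U))
    (htpV : TorsionPair (leftPerp V) V) (hX : X = U ∩ V ∩ N) (hXsumm : ClosedUnderSummands X)
    (h1 : ∀ A : T, (A⟦(-1 : ℤ)⟧) ∈ leftPerp V → A ∈ U ∩ N)
    (h2 : ∀ A : T, (A⟦(1 : ℤ)⟧) ∈ rightPerp U ↔ A ∈ V ∩ N) : U ∩ N ⊆ perpLeftX X V := by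
  intro C hC B hB f
  obtain ⟨C₀, X₀, c, p, d, hT, hC₀, hC₀1, hX₀⟩ := exists_distTriang_leftPerp hN htpV h1 hC.2
  have hX₀X : X₀ ∈ X := mem_of_mem_leftPerp_rightPerp htpU hX hXsumm h2
    (obj₂_mem_leftPerp (rot_of_distTriang _ hT) (mem_leftPerp_rightPerp hC.1)
      (mem_leftPerp_rightPerp hC₀1.1)) ((h2 X₀).2 hX₀)
  obtain ⟨f', hf'⟩ := Triangle.yoneda_exact₂ _ hT f (hC₀ B hB _)
  exact ⟨X₀, hX₀X, p, f', hf'⟩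

end TorsionPairs

section Triangle

variable {U V X : Set T} {M A B D : T} {a : M ⟶ A} {s : A ⟶ B} {g : B ⟶ M⟦(1 : ℤ)⟧}

lemma exists_retraction_modulo (hT : Triangle.mk a s g ∈ distTriang T) (hA : A ∈ U)
    (hB : B ∈ U) (p : M ⟶ D) (a' : D ⟶ A) (ha : p ≫ a' = a) (hD : D ∈ perpRightX U X)
    (hD1 : D⟦(1 : ℤ)⟧ ∈ rightPerp U) : ∃ t : B ⟶ A, FactorsThru X (𝟙 A - s ≫ t) := by
  obtain ⟨ζ, hζ⟩ : ∃ ζ : A ⟶ D, p = a ≫ ζ :=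
    Triangle.yoneda_exact₂ _ (inv_rot_of_distTriang _ hT) p (shift_neg_one_hom_eq_zero hB hD1 _)
  have hζa : a ≫ (𝟙 A - ζ ≫ a') = 0 := by
    rw [Preadditive.comp_sub, comp_id, ← assoc, ← hζ, ha, sub_self]
  obtain ⟨t, ht⟩ : ∃ t : B ⟶ A, 𝟙 A - ζ ≫ a' = s ≫ t := Triangle.yoneda_exact₂ _ hT _ hζa
  refine ⟨t, ?_⟩
  rw [← ht, sub_sub_cancel]
  exact (hD A hA ζ).comp_right a'

lemma exists_section_modulo (hT : Triangle.mk a s g ∈ distTriang T) (hB : B ∈ U) (hBV : B ∈ V)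
    {C : T} {c : C ⟶ M} {p : M ⟶ D} {d : D ⟶ C⟦(1 : ℤ)⟧} (hT' : Triangle.mk c p d ∈ distTriang T)
    (a' : D ⟶ A) (ha : p ≫ a' = a) (hC1 : C⟦(1 : ℤ)⟧ ∈ perpLeftX X V)
    (hD1 : D⟦(1 : ℤ)⟧ ∈ rightPerp U) : ∃ t : B ⟶ A, FactorsThru X (𝟙 B - t ≫ s) := by
  obtain ⟨ξ, -, hξ⟩ : ∃ ξ : C⟦(1 : ℤ)⟧ ⟶ B, _ ∧ (-c⟦(1 : ℤ)⟧') ≫ (𝟙 M)⟦(1 : ℤ)⟧' = ξ ≫ g :=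
    complete_distinguished_triangle_morphism _ _ (rot_of_distTriang _ hT') hT (𝟙 M) a'
      (ha.trans (id_comp a).symm)
  obtain ⟨β, hβ⟩ : ∃ β : B ⟶ C⟦(1 : ℤ)⟧, g = β ≫ (-c⟦(1 : ℤ)⟧') :=
    Triangle.coyoneda_exact₂ _
      (rot_of_distTriang _ (rot_of_distTriang _ (rot_of_distTriang _ hT'))) g (hD1 B hB _)
  have hβξ : (𝟙 B - β ≫ ξ) ≫ g = 0 := by
    rw [CategoryTheory.Functor.map_id, comp_id] at hξ
    rw [Preadditive.sub_comp, id_comp, assoc, ← hξ, ← hβ, sub_self]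
  obtain ⟨t, ht⟩ : ∃ t : B ⟶ A, 𝟙 B - β ≫ ξ = t ≫ s :=
    Triangle.coyoneda_exact₂ _ (rot_of_distTriang _ hT) _ hβξ
  refine ⟨t, ?_⟩
  rw [← ht, sub_sub_cancel]
  exact (hC1 B hBV ξ).comp_left β

end Triangle

theorem statement_6 (N U V X : Set T) (hN : IsTriangulatedSub N)
    (htpU : TorsionPair U (rightPerp U)) (htpV : TorsionPair (leftPerp V) V)
    (hX : X = U ∩ V ∩ N) (hXsumm : ClosedUnderSummands X)
    (h1 : ∀ A : T, (A⟦(-1 : ℤ)⟧) ∈ leftPerp V → A ∈ U ∩ N)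
    (h2 : ∀ A : T, (A⟦(1 : ℤ)⟧) ∈ rightPerp U ↔ A ∈ V ∩ N) :
    VerdierCondition N U X V := by
  intro A B N₀ s g h hT hA hB hN₀
  have hT₁ := inv_rot_of_distTriang _ hT
  obtain ⟨C, D, c, p, d, hT₂, hC, hC1, hD⟩ :=
    exists_distTriang_leftPerp hN htpV h1 (hN.unshift N₀ hN₀)
  have hD1 := (h2 D).2 hD
  obtain ⟨a', ha'⟩ :=
    Triangle.yoneda_exact₂ _ hT₂ (Triangle.mk s g h).invRotate.mor₁ (hC A hA.2 _)
  obtain ⟨t₁, ht₁⟩ := exists_retraction_modulo hT₁ hA.1 hB.1 p a' ha'.symm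
    (inter_subset_perpRightX htpU hX h2 hD) hD1
  obtain ⟨t₂, ht₂⟩ := exists_section_modulo hT₁ hB.1 hB.2 hT₂ a' ha'.symm
    (inter_subset_perpLeftX hN htpU htpV hX hXsumm h1 h2 hC1) hD1
  exact ⟨t₂, factorsThru_id_sub_comp_of_factorsThru
    (fun _ h₁ _ h₂ ↦ biprod_mem htpU hX hXsumm h2 h₁ h₂) ht₁ ht₂, ht₂⟩

end VerdierPaper
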